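/- arXiv:1301.1416 — 2 statements merged into one kernel-verified Lean document; each statement's English description precedes it below -/
import Mathlib

section
/- Let m ≥ 1 and let η_1, …, η_m : ℤ → ℝ be sequences such that for every j with 1 ≤ j ≤ m the Δ-Wronskian W_j^Δ(η_1,…,η_j)(n) is nonzero for all n ∈ ℤ. Define T_0 = id and, inductively for 1 ≤ j ≤ m, φ_j := T_{j−1}(η_j) and T_j := T_d(φ_j)∘T_{j−1}. Then T_m annihilates each of its generating sequences: T_m(η_i) = 0 for every i with 1 ≤ i ≤ m. -/
/-- Difference operator: `(Δ f) n = f (n+1) - f n`. -/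
def deltaOp (f : ℤ → ℝ) : ℤ → ℝ := fun n => f (n + 1) - f n

/-- Difference-type gauge transformation operator `T_d(q) = Λ(q)∘Δ∘q⁻¹`:
`(T_d(q)f)(n) = q(n+1)·(Δ(f/q))(n)`. -/
noncomputable def Td (q f : ℤ → ℝ) : ℤ → ℝ := fun n => q (n + 1) * deltaOp (fun m => f m / q m) n

/-- Δ-Wronskian `W_k^Δ(f_1,…,f_k)(n) = det[(Δ^{i−1} f_j)(n)]_{1≤i,j≤k}`
(here `i j : Fin k` are 0-based, so rows are `Δ^i` and columns the functions). -/
noncomputable def Wr {k : ℕ} (η : Fin k → ℤ → ℝ) (n : ℤ) : ℝ :=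
  (Matrix.of fun i j : Fin k => (deltaOp^[(i : ℕ)] (η j)) n).det

/-- Iterated gauge transformation: `T_0 = id` and `T_{j+1} = T_d(T_j(η_{j+1}))∘T_j`,
where `η 0, η 1, …` are the generating sequences `η_1, η_2, …` (0-based indexing). -/
noncomputable def Titer (η : ℕ → ℤ → ℝ) : ℕ → (ℤ → ℝ) → (ℤ → ℝ)
  | 0 => id
  | j + 1 => Td (Titer η j (η j)) ∘ Titer η j

/-- Coefficients of `Δ^i` expanded in shifts. -/
noncomputable def dcoef : ℕ → ℕ → ℝ
  | 0, 0 => 1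
  | 0, _+1 => 0
  | i+1, 0 => - dcoef i 0
  | i+1, s+1 => dcoef i s - dcoef i (s+1)

lemma dcoef_zero_of_lt : ∀ i s, i < s → dcoef i s = 0 := by
  intro i
  induction i with
  | zero => intro s hs; cases s with
    | zero => omega
    | succ t => rfl
  | succ i ih =>
    intro s hs
    cases s with
    | zero => omega
    | succ t =>
      show dcoef i t - dcoef i (t+1) = 0
      rw [ih t (by omega), ih (t+1) (by omega), sub_zero]

lemma dcoef_diag : ∀ i, dcoef i i = 1 := by
  intro i
  induction i with
  | zero => rfl
  | succ i ih =>
    show dcoef i i - dcoef i (i+1) = 1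
    rw [ih, dcoef_zero_of_lt i (i+1) (by omega), sub_zero]

lemma delta_iter (f : ℤ → ℝ) : ∀ (i : ℕ) (n : ℤ),
    deltaOp^[i] f n = ∑ s ∈ Finset.range (i+1), dcoef i s * f (n + s) := by
  intro i
  induction i with
  | zero => intro n; simp [dcoef]
  | succ i ih =>
    intro n
    rw [Function.iterate_succ_apply']
    show deltaOp^[i] f (n+1) - deltaOp^[i] f n = _
    rw [ih, ih]
    rw [Finset.sum_range_succ' (fun t => dcoef (i+1) t * f (n + t)) (i+1)]
    have h0 : dcoef (i+1) 0 * f (n + (0:ℕ)) = - (dcoef i 0 * f n) := by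
      show (- dcoef i 0) * f (n + ((0:ℕ):ℤ)) = _
      push_cast; ring_nf
    have h1 : ∀ s ∈ Finset.range (i+1),
        dcoef (i+1) (s+1) * f (n + (s+1:ℕ)) =
        dcoef i s * f ((n+1) + s) - dcoef i (s+1) * f (n + (s+1:ℕ)) := by
      intro s _
      show (dcoef i s - dcoef i (s+1)) * f (n + ((s:ℕ)+1:ℕ)) = _
      have : (n:ℤ) + ((s:ℕ)+1:ℕ) = (n+1) + s := by push_cast; ring
      rw [this]; ring
    rw [Finset.sum_congr rfl h1, h0, Finset.sum_sub_distrib]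
    have h2 : (∑ s ∈ Finset.range (i+1), dcoef i (s+1) * f (n + (s+1:ℕ)))
        + dcoef i 0 * f n
        = ∑ s ∈ Finset.range (i+1), dcoef i s * f (n + s) := by
      have := Finset.sum_range_succ' (fun t => dcoef i t * f (n + t)) (i+1)
      rw [Finset.sum_range_succ (fun t => dcoef i t * f (n + t)) (i+1)] at this
      have hz : dcoef i (i+1) * f (n + (i+1:ℕ)) = 0 := by
        rw [dcoef_zero_of_lt i (i+1) (by omega), zero_mul]
      rw [hz, add_zero] at this
      have h0' : dcoef i 0 * f (n + ((0:ℕ):ℤ)) = dcoef i 0 * f n := by norm_num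
      rw [h0'] at this
      linarith [this]
    linarith [h2]

lemma wr_eq_det {k : ℕ} (η : Fin k → ℤ → ℝ) (n : ℤ) :
    Wr η n = (Matrix.of fun s t : Fin k => η t (n + s)).det := by
  classical
  set C : Matrix (Fin k) (Fin k) ℝ := Matrix.of fun s t : Fin k => η t (n + s) with hC
  set L : Matrix (Fin k) (Fin k) ℝ := Matrix.of fun i s : Fin k => dcoef i s with hL
  have hM : (Matrix.of fun i j : Fin k => (deltaOp^[(i : ℕ)] (η j)) n) = L * C := by
    ext i j
    rw [Matrix.mul_apply]
    show deltaOp^[(i:ℕ)] (η j) n = ∑ s : Fin k, dcoef i s * η j (n + s)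
    rw [delta_iter, Fin.sum_univ_eq_sum_range (fun s => dcoef i s * η j (n + s)) k]
    apply Finset.sum_subset
    · intro x hx
      simp only [Finset.mem_range] at *
      omega
    · intro x _ hx
      simp only [Finset.mem_range] at hx
      rw [dcoef_zero_of_lt i x (by omega), zero_mul]
  have hLdet : L.det = 1 := by
    have htri : L.BlockTriangular ⇑OrderDual.toDual := by
      intro i j hij
      exact dcoef_zero_of_lt i j (by exact_mod_cast hij)
    rw [Matrix.det_of_lowerTriangular L htri]
    have : ∀ i : Fin k, L i i = 1 := fun i => dcoef_diag i
    simp [this]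
  rw [Wr, hM, Matrix.det_mul, hLdet, one_mul]

lemma nonvanish (j : ℕ) (η : ℕ → ℤ → ℝ) (c : ℤ → ℕ → ℝ) (n : ℤ)
    (hker : ∀ i < j, η i (n + j) + ∑ l ∈ Finset.range j, c n l * η i (n + l) = 0)
    (hw : Wr (fun i : Fin (j+1) => η i) n ≠ 0) :
    η j (n + j) + ∑ l ∈ Finset.range j, c n l * η j (n + l) ≠ 0 := by
  classical
  intro hq
  set A : Matrix (Fin (j+1)) (Fin (j+1)) ℝ :=
    Matrix.of (fun i l : Fin (j+1) => η i (n + l)) with hA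
  have hdet : A.det ≠ 0 := by
    have : A = (Matrix.of fun s t : Fin (j+1) => η t (n + s)).transpose := by
      ext i l; rfl
    rw [this, Matrix.det_transpose]
    rw [wr_eq_det (fun i : Fin (j+1) => η i) n] at hw
    exact hw
  set v : Fin (j+1) → ℝ := fun l => if (l : ℕ) = j then 1 else c n l with hv
  have hmv : A.mulVec v = 0 := by
    funext i
    show ∑ l : Fin (j+1), A i l * v l = 0
    rw [Fin.sum_univ_castSucc]
    have hlast : A i (Fin.last j) * v (Fin.last j) = η i (n + j) := by
      simp [hA, hv, Fin.last]
    have hrest : ∀ l : Fin j, A i l.castSucc * v l.castSucc = c n l * η i (n + l) := by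
      intro l
      have hne : ((l.castSucc : Fin (j+1)) : ℕ) ≠ j := by
        simp [Fin.castSucc]; omega
      simp only [hA, hv, Matrix.of_apply, if_neg hne]
      rw [mul_comm]
      congr 2
    rw [hlast, Finset.sum_congr rfl (fun l _ => hrest l)]
    rw [Fin.sum_univ_eq_sum_range (fun l => c n l * η i (n + l)) j]
    rcases Nat.lt_or_ge (i : ℕ) j with hij | hij
    · have := hker i hij
      have hi : η (i : ℕ) = η ((i : Fin (j+1)) : ℕ) := rfl
      linarith [this]
    · have hij' : (i : ℕ) = j := by omega
      rw [hij']
      linarith [hq]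
  have := Matrix.eq_zero_of_mulVec_eq_zero hdet hmv
  have h1 : v (Fin.last j) = 0 := by rw [this]; rfl
  rw [hv] at h1
  simp [Fin.last] at h1

lemma key (m : ℕ) (η : ℕ → ℤ → ℝ)
    (hW : ∀ j : ℕ, 1 ≤ j → j ≤ m → ∀ n : ℤ, Wr (fun i : Fin j => η i) n ≠ 0) :
    ∀ j ≤ m,
      (∃ c : ℤ → ℕ → ℝ, ∀ f n, Titer η j f n
          = f (n + j) + ∑ l ∈ Finset.range j, c n l * f (n + l)) ∧
      (∀ i < j, Titer η j (η i) = 0) := by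
  intro j
  induction j with
  | zero =>
    intro _
    constructor
    · exact ⟨fun _ _ => 0, fun f n => by simp [Titer]⟩
    · intro i hi; omega
  | succ j ih =>
    intro hjm
    obtain ⟨⟨c, hc⟩, hker⟩ := ih (by omega)
    set q : ℤ → ℝ := Titer η j (η j) with hqdef
    -- q is nonvanishing
    have hqne : ∀ n, q n ≠ 0 := by
      intro n
      have hq : q n = η j (n + j) + ∑ l ∈ Finset.range j, c n l * η j (n + l) := hc (η j) n
      rw [hq]
      apply nonvanish j η c n
      · intro i hi
        have := hker i hi
        have h2 : Titer η j (η i) n = 0 := by rw [this]; rfl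
        rw [hc (η i) n] at h2
        exact h2
      · exact hW (j+1) (by omega) hjm n
    constructor
    · -- monic form for j+1
      refine ⟨fun n l => (if l = 0 then 0 else c (n+1) (l-1))
          - (q (n+1) / q n) * (if l = j then 1 else c n l), ?_⟩
      intro f n
      have hT : Titer η (j+1) f n
          = Titer η j f (n+1) - (q (n+1) / q n) * Titer η j f n := by
        show Td q (Titer η j f) n = _
        unfold Td deltaOp
        rw [mul_sub]
        rw [mul_div_cancel₀ _ (hqne (n+1))]
        ring
      rw [hT, hc f (n+1), hc f n]
      have hsplit : ∑ l ∈ Finset.range (j+1),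
          ((if l = 0 then 0 else c (n+1) (l-1))
            - (q (n+1) / q n) * (if l = j then 1 else c n l)) * f (n + l)
          = (∑ l ∈ Finset.range (j+1), (if l = 0 then (0:ℝ) else c (n+1) (l-1)) * f (n + l))
            - (q (n+1) / q n) * ∑ l ∈ Finset.range (j+1),
                (if l = j then 1 else c n l) * f (n + l) := by
        rw [Finset.mul_sum, ← Finset.sum_sub_distrib]
        apply Finset.sum_congr rfl
        intro l _; ring
      rw [hsplit]
      have h1 : (∑ l ∈ Finset.range (j+1), (if l = 0 then (0:ℝ) else c (n+1) (l-1)) * f (n + l))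
          = ∑ l ∈ Finset.range j, c (n+1) l * f ((n+1) + l) := by
        rw [Finset.sum_range_succ' (fun l => (if l = 0 then (0:ℝ) else c (n+1) (l-1)) * f (n + l)) j]
        simp only [if_neg (Nat.succ_ne_zero _), Nat.add_sub_cancel, if_pos rfl, zero_mul, add_zero]
        norm_num
        apply Finset.sum_congr rfl
        intro l _
        congr 1
        push_cast; ring_nf
      have h2 : (∑ l ∈ Finset.range (j+1), (if l = j then (1:ℝ) else c n l) * f (n + l))
          = f (n + j) + ∑ l ∈ Finset.range j, c n l * f (n + l) := by
        rw [Finset.sum_range_succ (fun l => (if l = j then (1:ℝ) else c n l) * f (n + l)) j]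
        rw [if_pos rfl, one_mul]
        rw [Finset.sum_congr rfl (fun l hl => by
          rw [if_neg (by simp only [Finset.mem_range] at hl; omega)])]
        ring
      rw [h1, h2]
      have h3 : (n:ℤ) + 1 + j = n + ((j:ℕ)+1:ℕ) := by push_cast; ring
      rw [h3]
      ring
    · -- kernel property
      intro i hi
      rcases Nat.lt_or_ge i j with hij | hij
      · have h0 : Titer η j (η i) = 0 := hker i hij
        show Td q (Titer η j (η i)) = 0
        rw [h0]
        funext n
        show q (n+1) * ((0:ℤ → ℝ) (n+1) / q (n+1) - (0:ℤ → ℝ) n / q n) = 0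
        simp
      · have hij' : i = j := by omega
        subst hij'
        show Td q q = 0
        funext n
        show q (n+1) * (q (n+1) / q (n+1) - q n / q n) = 0
        rw [div_self (hqne (n+1)), div_self (hqne n), sub_self, mul_zero]


/-- The `m`-step gauge transformation operator `T_m` annihilates each of its
generating sequences: `T_m(η_i) = 0` for `1 ≤ i ≤ m` (0-based: `η (i-1)`). -/
theorem stmt10 (m : ℕ) (hm : 1 ≤ m) (η : ℕ → ℤ → ℝ)
    (hW : ∀ j : ℕ, 1 ≤ j → j ≤ m → ∀ n : ℤ, Wr (fun i : Fin j => η i) n ≠ 0) :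
    ∀ i : ℕ, 1 ≤ i → i ≤ m → Titer η m (η (i - 1)) = 0 := by
  intro i h1 h2
  exact (key m η hW m le_rfl).2 (i - 1) (by omega)
end

section
/- Let m ≥ 1 and let η_1, …, η_m : ℤ → ℝ be sequences such that for every j with 1 ≤ j ≤ m the Δ-Wronskian W_j^Δ(η_1,…,η_j)(n) is nonzero for all n ∈ ℤ. Define T_0 = id and, inductively, φ_j := T_{j−1}(η_j) and T_j := T_d(φ_j)∘T_{j−1}. For 1 ≤ i ≤ m let M_i(n) be the determinant of the (m−1)×(m−1) matrix obtained from the m×(m−1) matrix with entries A_{l,k}(n) = (Δ^{k−1} η_l)(n+1) (rows l = 1,…,m, columns k = 1,…,m−1) by deleting its i-th row. Let g : ℤ → ℝ be any sequence and let F_1, …, F_m : ℤ → ℝ satisfy (ΔF_i)(n) = M_i(n)·g(n) / W_m^Δ(η_1,…,η_m)(n+1) for all n. Then T_m applied to the sequence (−1)^{m−1}·Σ_{i=1}^{m} (−1)^{i+1} η_i·F_i equals g; that is, the determinant expression for T_m⁻¹ given by the first-column expansion of the inverse Wronskian matrix is a right inverse of T_m. -/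
/-!
By Crum's formula, `T_j f = W(η₁, …, η_j, f) / W(η₁, …, η_j)`. Its induction step is the
Desnanot–Jacobi identity for Δ-Wronskians, which holds because both sides are linear functionals
of the `(j+1)`-jet of `f` at `n` that vanish on `η₁, …, η_{j+1}` and agree on a Kronecker delta;
these `j + 2` sequences have independent jets since `W(η₁, …, η_{j+1})(n) ≠ 0`.

For `h = (-1)^{m-1} Σ (-1)^{i+1} η_i F_i`, discrete variation of parameters gives
`Δ^r h = (-1)^{m-1} Σ (-1)^{i+1} Δ^r η_i · F_i` for `r < m` and an extra term `g` for `r = m`: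
the sums `Σ (-1)^{i+1} (Δ^r η_i)(n+1) M_i(n)` are, up to sign, Laplace expansions of
`W_m(n+1)` with its last row replaced by `Δ^r η(n+1)`, so they vanish for `r < m - 1`. Hence
`W(η₁, …, η_m, h) = g · W(η₁, …, η_m)` and `T_m h = g`.
-/

open Finset

lemma deltaOp_eq_fwdDiff : deltaOp = fwdDiff 1 := rfl

lemma deltaOp_iter_succ_apply (f : ℤ → ℝ) (r : ℕ) (n : ℤ) :
    deltaOp^[r + 1] f n = deltaOp^[r] f (n + 1) - deltaOp^[r] f n := by
  rw [Function.iterate_succ_apply']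
  rfl

lemma deltaOp_iter_sub (f g : ℤ → ℝ) (r : ℕ) :
    deltaOp^[r] (f - g) = deltaOp^[r] f - deltaOp^[r] g := by
  simpa only [deltaOp_eq_fwdDiff, fwdDiff_aux.coe_fwdDiffₗ_pow] using
    map_sub (fwdDiff_aux.fwdDiffₗ ℤ ℝ 1 ^ r) f g

lemma deltaOp_iter_ite_eq (p : ℤ) (r : ℕ) (x : ℤ) (h : x + r ≤ p) :
    deltaOp^[r] (fun y => if y = p then (1 : ℝ) else 0) x = if x + r = p then 1 else 0 := by
  induction r generalizing x with
  | zero => simp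
  | succ r ih =>
    rw [deltaOp_iter_succ_apply, ih (x + 1) (by push_cast at h ⊢; omega), ih x (by omega)]
    split_ifs <;> first | (exfalso; omega) | norm_num

/-- Discrete variation of parameters. -/
theorem deltaOp_iter_sum_mul {ι : Type*} (s : Finset ι) (u F : ι → ℤ → ℝ) (g : ℤ → ℝ) (K : ℕ)
    (hF : ∀ k ≤ K, ∀ n, ∑ i ∈ s, deltaOp^[k] (u i) (n + 1) * deltaOp (F i) n
      = if k = K then g n else 0) :
    ∀ k ≤ K + 1, ∀ n, deltaOp^[k] (fun x => ∑ i ∈ s, u i x * F i x) n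
      = ∑ i ∈ s, deltaOp^[k] (u i) n * F i n + if k = K + 1 then g n else 0 := by
  intro k
  induction k with
  | zero => simp
  | succ k ih =>
    intro hk n
    rw [deltaOp_iter_succ_apply, ih (by omega), ih (by omega), if_neg (by omega),
      if_neg (by omega), add_zero, add_zero]
    simp only [Nat.add_right_cancel_iff]
    rw [← hF k (by omega) n, ← sum_sub_distrib, ← sum_add_distrib]
    refine sum_congr rfl fun i _ => ?_
    rw [deltaOp_iter_succ_apply, deltaOp]
    ring

lemma Matrix.det_of_snoc_eq_sum {R : Type*} [CommRing R] {k : ℕ}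
    (A : Matrix (Fin (k + 1)) (Fin k) R) (v : Fin (k + 1) → R) :
    (Matrix.of fun i => Fin.snoc (A i) (v i)).det
      = ∑ i : Fin (k + 1), (-1) ^ ((i : ℕ) + k) * v i * (A.submatrix i.succAbove id).det := by
  rw [Matrix.det_succ_column _ (Fin.last k)]
  refine sum_congr rfl fun i _ => ?_
  simp only [Fin.succAbove_last, Matrix.of_apply, Fin.snoc_last]
  congr 2
  ext a b
  simp

lemma Wr_zero (ξ : Fin 0 → ℤ → ℝ) (n : ℤ) : Wr ξ n = 1 := Matrix.det_fin_zero

section Wronskian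

variable {k : ℕ} (ξ : Fin k → ℤ → ℝ) (n : ℤ)

lemma Wr_snoc_eq_sum (f : ℤ → ℝ) :
    Wr (Fin.snoc ξ f) n = ∑ r : Fin (k + 1), (-1) ^ ((r : ℕ) + k) * deltaOp^[r] f n *
      ((Matrix.of fun (r : Fin (k + 1)) j => deltaOp^[r] (ξ j) n).submatrix r.succAbove id).det :=
    by
  rw [Wr, ← Matrix.det_of_snoc_eq_sum]
  congr 1
  ext r j
  induction j using Fin.lastCases <;> simp

lemma Wr_snoc_self (i : Fin k) : Wr (Fin.snoc ξ (ξ i)) n = 0 :=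
  Matrix.det_zero_of_column_eq (Fin.castSucc_lt_last i).ne fun r => by simp

lemma Wr_snoc_eq_of_jet (f : ℤ → ℝ) (a : Fin k → ℝ) (c : ℝ)
    (hf : ∀ r : Fin (k + 1), deltaOp^[r] f n
      = ∑ i, a i * deltaOp^[r] (ξ i) n + if r = Fin.last k then c else 0) :
    Wr (Fin.snoc ξ f) n = c * Wr ξ n := by
  have hself := fun i => Wr_snoc_self ξ n i
  simp only [Wr_snoc_eq_sum] at hself ⊢
  simp only [hf, mul_add, add_mul, sum_add_distrib, mul_sum, sum_mul]
  rw [sum_comm, sum_eq_zero fun i _ => ?_, zero_add,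
    sum_eq_single (Fin.last k) (by simp_all) (by simp)]
  · rw [if_pos rfl, Fin.val_last, ← two_mul, pow_mul, neg_one_sq, one_pow, one_mul,
      Fin.succAbove_last]
    rfl
  · rw [← mul_zero (a i), ← hself i, mul_sum]
    exact sum_congr rfl fun _ _ => by ring

noncomputable def wrSnoc : (ℤ → ℝ) →ₗ[ℝ] ℝ where
  toFun f := Wr (Fin.snoc ξ f) n
  map_add' f g := by
    simp only [Wr_snoc_eq_sum, deltaOp_eq_fwdDiff, fwdDiff_iter_add, Pi.add_apply, add_mul,
      mul_add, sum_add_distrib]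
  map_smul' c f := by
    simp only [Wr_snoc_eq_sum, deltaOp_eq_fwdDiff, fwdDiff_iter_const_smul, Pi.smul_apply,
      smul_eq_mul, RingHom.id_apply, mul_sum]
    exact sum_congr rfl fun _ _ => by ring

lemma wrSnoc_apply (f : ℤ → ℝ) : wrSnoc ξ n f = Wr (Fin.snoc ξ f) n := rfl

lemma LinearMap.eq_zero_of_jet_of_Wr_ne_zero (hξ : Wr ξ n ≠ 0) (E : (ℤ → ℝ) →ₗ[ℝ] ℝ)
    (hjet : ∀ f, (∀ r : Fin k, deltaOp^[r] f n = 0) → E f = 0) (hE : ∀ i, E (ξ i) = 0) :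
    E = 0 := by
  ext f
  set D : Matrix (Fin k) (Fin k) ℝ := Matrix.of fun r i => deltaOp^[r] (ξ i) n
  set c := D⁻¹.mulVec fun r : Fin k => deltaOp^[r] f n
  have hc : D.mulVec c = fun r : Fin k => deltaOp^[r] f n := by
    rw [Matrix.mulVec_mulVec, Matrix.mul_nonsing_inv _ hξ.isUnit, Matrix.one_mulVec]
  have hrest : E (f - ∑ i, c i • ξ i) = 0 := hjet _ fun r => by
    rw [deltaOp_iter_sub, Pi.sub_apply, ← congrFun hc r, deltaOp_eq_fwdDiff,
      fwdDiff_iter_finsetSum]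
    simp [Matrix.mulVec, dotProduct, D, mul_comm, deltaOp_eq_fwdDiff]
  rw [map_sub, map_sum] at hrest
  simpa [hE] using hrest

lemma Wr_snoc_eq_zero_of_jet (f : ℤ → ℝ) (hf : ∀ r : Fin (k + 1), deltaOp^[r] f n = 0) :
    Wr (Fin.snoc ξ f) n = 0 := by
  simpa using Wr_snoc_eq_of_jet ξ n f 0 0 (by simp [hf])

lemma Wr_snoc_ite (p : ℤ) (hp : n + k ≤ p) :
    Wr (Fin.snoc ξ fun y => if y = p then 1 else 0) n = (if n + k = p then 1 else 0) * Wr ξ n := by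
  refine Wr_snoc_eq_of_jet ξ n _ 0 _ fun r => ?_
  rw [deltaOp_iter_ite_eq p r n (by omega)]
  simp only [Pi.zero_apply, zero_mul, sum_const_zero, zero_add, Fin.ext_iff, Fin.val_last]
  split_ifs <;> first | rfl | (exfalso; omega)

end Wronskian

/-- The Desnanot–Jacobi identity for Δ-Wronskians. -/
theorem Wr_desnanot_jacobi {j : ℕ} (ξ : Fin (j + 1) → ℤ → ℝ) (n : ℤ) (hξ : Wr ξ n ≠ 0)
    (f : ℤ → ℝ) :
    Wr ξ n * Wr (Fin.snoc (Fin.init ξ) f) (n + 1) - Wr ξ (n + 1) * Wr (Fin.snoc (Fin.init ξ) f) n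
      = Wr (Fin.init ξ) (n + 1) * Wr (Fin.snoc ξ f) n := by
  set E : (ℤ → ℝ) →ₗ[ℝ] ℝ := Wr ξ n • wrSnoc (Fin.init ξ) (n + 1)
    - Wr ξ (n + 1) • wrSnoc (Fin.init ξ) n - Wr (Fin.init ξ) (n + 1) • wrSnoc ξ n
  suffices E = 0 by
    simpa [E, wrSnoc_apply, sub_eq_zero] using LinearMap.congr_fun this f
  set δ : ℤ → ℝ := fun y => if y = n + (j + 1 : ℕ) then 1 else 0
  -- the jets of `ξ` and `δ` at `n` form a basis of all jets of order `j + 1`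
  have hbasis : Wr (Fin.snoc ξ δ) n ≠ 0 := by
    rwa [Wr_snoc_ite _ _ _ le_rfl, if_pos rfl, one_mul]
  refine LinearMap.eq_zero_of_jet_of_Wr_ne_zero _ n hbasis E (fun f hf => ?_) fun i => ?_
  · have hf' : ∀ r : Fin (j + 1), deltaOp^[r] f (n + 1) = 0 := fun r => by
      have h0 : deltaOp^[r] f n = 0 := by simpa using hf r.castSucc
      simpa [deltaOp_iter_succ_apply, h0] using hf r.succ
    simp [E, wrSnoc_apply, Wr_snoc_eq_zero_of_jet _ _ f hf, Wr_snoc_eq_zero_of_jet _ _ f hf',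
      Wr_snoc_eq_zero_of_jet _ _ f fun r => hf r.castSucc]
  · induction i using Fin.lastCases with
    | last =>
      simp only [E, Fin.snoc_last, LinearMap.sub_apply, LinearMap.smul_apply, wrSnoc_apply,
        smul_eq_mul]
      rw [Wr_snoc_ite _ _ _ (by push_cast; omega), Wr_snoc_ite _ _ _ (by push_cast; omega),
        Wr_snoc_ite _ _ _ le_rfl, if_pos (by push_cast; ring), if_neg (by push_cast; omega),
        if_pos rfl]
      ring
    | cast i =>
      simp only [E, Fin.snoc_castSucc, LinearMap.sub_apply, LinearMap.smul_apply, wrSnoc_apply,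
        smul_eq_mul]
      induction i using Fin.lastCases with
      | last =>
        rw [Fin.snoc_init_self, Wr_snoc_self]
        ring
      | cast i =>
        have hinit (x : ℤ) : Wr (Fin.snoc (Fin.init ξ) (ξ i.castSucc)) x = 0 :=
          Wr_snoc_self (Fin.init ξ) x i
        rw [hinit, hinit, Wr_snoc_self]
        ring

lemma snoc_prefix (η : ℕ → ℤ → ℝ) (j : ℕ) :
    Fin.snoc (fun i : Fin j => η i) (η j) = fun i : Fin (j + 1) => η i :=
  Fin.snoc_init_self (fun i : Fin (j + 1) => η i)

/-- Crum's formula. -/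
theorem Titer_eq_Wr_div (η : ℕ → ℤ → ℝ) (j : ℕ)
    (hW : ∀ i ≤ j, ∀ n, Wr (fun l : Fin i => η l) n ≠ 0) (f : ℤ → ℝ) (n : ℤ) :
    Titer η j f n = Wr (Fin.snoc (fun i : Fin j => η i) f) n / Wr (fun i : Fin j => η i) n := by
  induction j generalizing f n with
  | zero =>
    simp [Titer, Wr]
    rfl
  | succ j ih =>
    have ih' := ih (fun i hi => hW i (by omega))
    have hφ (x : ℤ) : Titer η j (η j) x
        = Wr (fun i : Fin (j + 1) => η i) x / Wr (fun i : Fin j => η i) x := by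
      rw [ih', snoc_prefix]
    have hA := hW j (by omega)
    have hB := hW (j + 1) le_rfl
    have key := Wr_desnanot_jacobi (fun i : Fin (j + 1) => η i) n (hB n) f
    rw [show Fin.init (fun i : Fin (j + 1) => η i) = fun i : Fin j => η i from rfl] at key
    show Td (Titer η j (η j)) (Titer η j f) n = _
    simp only [Td, deltaOp, hφ, ih']
    field_simp [hA n, hA (n + 1), hB n, hB (n + 1)]
    linear_combination key

lemma Fin.val_succAbove_eq_ite {k : ℕ} (i : Fin (k + 1)) (l : Fin k) :
    (i.succAbove l : ℕ) = if (l : ℕ) < i then (l : ℕ) else (l : ℕ) + 1 := by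
  unfold Fin.succAbove
  split_ifs <;> simp_all [Fin.lt_def]

/-- Laplace expansion along an appended column `Δ^r ξ`, which repeats an existing column
when `r < k`. -/
lemma sum_neg_one_pow_mul_det_succAbove {k : ℕ} (ξ : Fin (k + 1) → ℤ → ℝ) (n : ℤ) (r : ℕ)
    (hr : r ≤ k) :
    ∑ i : Fin (k + 1), (-1) ^ (i : ℕ) * deltaOp^[r] (ξ i) n *
        (Matrix.of fun l c : Fin k => deltaOp^[c] (ξ (i.succAbove l)) n).det
      = if r = k then (-1) ^ k * Wr ξ n else 0 := by
  set A : Matrix (Fin (k + 1)) (Fin k) ℝ := Matrix.of fun l c => deltaOp^[c] (ξ l) n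
  have hsq : ((-1 : ℝ) ^ k) * (-1) ^ k = 1 := by rw [← mul_pow]; norm_num
  have hsum : ∑ i : Fin (k + 1), (-1) ^ (i : ℕ) * deltaOp^[r] (ξ i) n *
        (Matrix.of fun l c : Fin k => deltaOp^[c] (ξ (i.succAbove l)) n).det
      = (-1) ^ k * (Matrix.of fun i => Fin.snoc (A i) (deltaOp^[r] (ξ i) n)).det := by
    rw [Matrix.det_of_snoc_eq_sum, mul_sum]
    refine sum_congr rfl fun i _ => ?_
    have hminor : (Matrix.of fun l c : Fin k => deltaOp^[c] (ξ (i.succAbove l)) n)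
        = A.submatrix i.succAbove id := rfl
    rw [hminor, pow_add]
    linear_combination
      (-(-1) ^ (i : ℕ) * deltaOp^[r] (ξ i) n * (A.submatrix i.succAbove id).det) * hsq
  rw [hsum]
  split_ifs with hrk
  · subst hrk
    rw [Wr, ← Matrix.det_transpose]
    congr 2
    ext c l
    induction c using Fin.lastCases <;> simp [A]
  · rw [Matrix.det_zero_of_column_eq (Fin.castSucc_lt_last ⟨r, by omega⟩).ne fun l => by
      simp only [Matrix.of_apply, Fin.snoc_castSucc, Fin.snoc_last, A],
      mul_zero]

lemma deltaOp_iter_alternating_sum_mul (k : ℕ) (η : ℕ → ℤ → ℝ)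
    (hW : ∀ n, Wr (fun i : Fin (k + 1) => η i) n ≠ 0) (M : ℕ → ℤ → ℝ)
    (hM : ∀ i < k + 1, ∀ n : ℤ,
      M i n = (Matrix.of fun l c : Fin k =>
        deltaOp^[(c : ℕ)] (η (if (l : ℕ) < i then (l : ℕ) else (l : ℕ) + 1)) (n + 1)).det)
    (g : ℤ → ℝ) (F : ℕ → ℤ → ℝ)
    (hF : ∀ i < k + 1, ∀ n : ℤ,
      deltaOp (F i) n = M i n * g n / Wr (fun i : Fin (k + 1) => η i) (n + 1))
    (r : ℕ) (hr : r ≤ k + 1) (n : ℤ) :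
    deltaOp^[r] (fun x => (-1 : ℝ) ^ k * ∑ i ∈ range (k + 1), (-1 : ℝ) ^ i * η i x * F i x) n
      = ∑ i ∈ range (k + 1), (-1 : ℝ) ^ k * (-1) ^ i * F i n * deltaOp^[r] (η i) n
        + if r = k + 1 then g n else 0 := by
  set u : ℕ → ℤ → ℝ := fun i => ((-1 : ℝ) ^ k * (-1) ^ i) • η i
  have hu (i s : ℕ) (x : ℤ) : deltaOp^[s] (u i) x = (-1) ^ k * (-1) ^ i * deltaOp^[s] (η i) x := by
    simp [u, deltaOp_eq_fwdDiff]
  have hcond (s : ℕ) (hs : s ≤ k) (n : ℤ) :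
      ∑ i ∈ range (k + 1), deltaOp^[s] (u i) (n + 1) * deltaOp (F i) n
        = if s = k then g n else 0 := by
    have hminors := sum_neg_one_pow_mul_det_succAbove (fun i : Fin (k + 1) => η i) (n + 1) s hs
    simp only [Fin.val_succAbove_eq_ite] at hminors
    have hsq : ((-1 : ℝ) ^ k) * (-1) ^ k = 1 := by rw [← mul_pow]; norm_num
    rw [← Fin.sum_univ_eq_sum_range (fun i => deltaOp^[s] (u i) (n + 1) * deltaOp (F i) n)]
    calc _ = (-1) ^ k * (g n / Wr (fun i : Fin (k + 1) => η i) (n + 1)) *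
          ∑ i : Fin (k + 1), (-1) ^ (i : ℕ) * deltaOp^[s] (η i) (n + 1) *
            (Matrix.of fun l c : Fin k =>
              deltaOp^[c] (η (if (l : ℕ) < i then (l : ℕ) else (l : ℕ) + 1)) (n + 1)).det := by
          rw [mul_sum]
          refine sum_congr rfl fun i _ => ?_
          rw [hu, hF i i.isLt, hM i i.isLt]
          ring
      _ = _ := by
          rw [hminors]
          split_ifs
          · field_simp [hW (n + 1)]
            linear_combination g n * hsq
          · rw [mul_zero]
  have h := deltaOp_iter_sum_mul (range (k + 1)) u F g k hcond r hr n
  simp only [hu, u, Pi.smul_apply, smul_eq_mul] at h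
  convert h using 3
  · simp only [mul_sum]
    exact sum_congr rfl fun i _ => by ring
  · ring

/-- Indices are 0-based: `η i`, `M i`, `F i` are the paper's `η_{i+1}`, `M_{i+1}`, `F_{i+1}`. -/
theorem stmt13 (m : ℕ) (hm : 1 ≤ m) (η : ℕ → ℤ → ℝ)
    (hW : ∀ j : ℕ, 1 ≤ j → j ≤ m → ∀ n : ℤ, Wr (fun i : Fin j => η i) n ≠ 0)
    (M : ℕ → ℤ → ℝ)
    (hM : ∀ i : ℕ, i < m → ∀ n : ℤ,
      M i n = (Matrix.of fun l k : Fin (m - 1) =>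
        (deltaOp^[(k : ℕ)] (η (if (l : ℕ) < i then (l : ℕ) else (l : ℕ) + 1)))
          (n + 1)).det)
    (g : ℤ → ℝ) (F : ℕ → ℤ → ℝ)
    (hF : ∀ i : ℕ, i < m → ∀ n : ℤ,
      deltaOp (F i) n = M i n * g n / Wr (fun i : Fin m => η i) (n + 1)) :
    Titer η m
      (fun n => (-1 : ℝ) ^ (m - 1) *
        ∑ i ∈ Finset.range m, (-1 : ℝ) ^ i * η i n * F i n) = g := by
  obtain ⟨k, rfl⟩ : ∃ k, m = k + 1 := ⟨m - 1, by omega⟩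
  have hW' : ∀ j ≤ k + 1, ∀ n, Wr (fun i : Fin j => η i) n ≠ 0 := by
    rintro (_ | j) hj n
    · simp [Wr_zero]
    · exact hW _ (by omega) hj n
  funext n
  rw [Titer_eq_Wr_div η (k + 1) hW', div_eq_iff (hW' _ le_rfl n), Nat.add_sub_cancel]
  refine Wr_snoc_eq_of_jet _ n _ (fun i => (-1) ^ k * (-1) ^ (i : ℕ) * F i n) (g n) fun r => ?_
  rw [deltaOp_iter_alternating_sum_mul k η (hW' _ le_rfl) M hM g F hF r r.is_le n,
    Fin.sum_univ_eq_sum_range (fun i => (-1) ^ k * (-1) ^ i * F i n * deltaOp^[r] (η i) n)]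
  simp [Fin.ext_iff]
end
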